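/- Let α, ω > 0 with α/ω irrational. For every n ∈ ℕ sufficiently large, there exist integers kₙ and an odd integer ℓₙ such that σₙ := αkₙ + ωℓₙ satisfies 1/n ≤ σₙ ≤ 2/n; moreover for such a choice, |αkₙ| ≥ 1/n for all sufficiently large n. -/

import Mathlib

theorem sigma_n_choice_of_irrational_ratio
    (α ω : ℝ) (hα : 0 < α) (hω : 0 < ω)
    (hirr : Irrational (α / ω)) :
    ∃ N : ℕ, ∀ n : ℕ, N ≤ n →
      (∃ k l : ℤ, Odd l ∧
        1 / (n : ℝ) ≤ (k : ℝ) * α + (l : ℝ) * ω ∧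
        (k : ℝ) * α + (l : ℝ) * ω ≤ 2 / (n : ℝ)) ∧
      (∀ k l : ℤ, Odd l →
        1 / (n : ℝ) ≤ (k : ℝ) * α + (l : ℝ) * ω →
        (k : ℝ) * α + (l : ℝ) * ω ≤ 2 / (n : ℝ) →
        1 / (n : ℝ) ≤ |(k : ℝ) * α|) := by
  -- the subgroup generated by α and 2ω is dense
  have hdense : Dense ((AddSubgroup.closure {α, 2 * ω} : AddSubgroup ℝ) : Set ℝ) := by
    rcases AddSubgroup.dense_or_cyclic (AddSubgroup.closure {α, 2 * ω}) with h | ⟨a, ha⟩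
    · exact h
    · exfalso
      have hαmem : α ∈ AddSubgroup.closure ({α, 2 * ω} : Set ℝ) :=
        AddSubgroup.subset_closure (by simp)
      have hωmem : 2 * ω ∈ AddSubgroup.closure ({α, 2 * ω} : Set ℝ) :=
        AddSubgroup.subset_closure (by simp)
      rw [ha, AddSubgroup.mem_closure_singleton] at hαmem hωmem
      obtain ⟨m, hm⟩ := hαmem
      obtain ⟨j, hj⟩ := hωmem
      have hj0 : (j : ℝ) ≠ 0 := by
        intro h0
        have : j • a = 0 := by
          rw [zsmul_eq_mul, h0, zero_mul]
        nlinarith [hj ▸ this]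
      have : α / ω = (2 * m : ℤ) / (j : ℤ) := by
        have ha0 : (j:ℝ) * a = 2 * ω := by rw [← hj]; push_cast [zsmul_eq_mul]; ring
        have hb0 : (m:ℝ) * a = α := by rw [← hm]; push_cast [zsmul_eq_mul]; ring
        have hω0 : ω ≠ 0 := ne_of_gt hω
        have key : α * (j:ℝ) = 2 * (m:ℝ) * ω := by
          calc α * (j:ℝ) = (m:ℝ) * a * j := by rw [hb0]
            _ = (m:ℝ) * ((j:ℝ) * a) := by ring
            _ = 2 * (m:ℝ) * ω := by rw [ha0]; ring
        field_simp
        push_cast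
        linarith [key]
      exact hirr ⟨(2 * m : ℤ) / (j : ℤ), by push_cast [this]; ring⟩
  obtain ⟨N0, hN0⟩ := exists_nat_gt (3 / ω)
  refine ⟨max (N0 + 1) 1, fun n hn => ?_⟩
  have hn1 : 1 ≤ n := le_trans (le_max_right _ _) hn
  have hnpos : (0 : ℝ) < n := by exact_mod_cast hn1
  have hnN0 : (3 : ℝ) / ω < n := by
    have : (N0 : ℝ) < n := by
      have : N0 + 1 ≤ n := le_trans (le_max_left _ _) hn
      exact_mod_cast Nat.lt_of_succ_le this
    linarith
  constructor
  · -- existence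
    have hne : (1 / (n:ℝ) - ω) < (2 / (n:ℝ) - ω) := by
      have : (1:ℝ)/n < 2/n := by
        rw [div_lt_div_iff₀ hnpos hnpos]; nlinarith
      linarith
    obtain ⟨x, hx, hxmem⟩ := hdense.exists_mem_open isOpen_Ioo
      (Set.nonempty_Ioo.2 hne)
    obtain ⟨k, m, hkm⟩ := AddSubgroup.mem_closure_pair.1 hx
    refine ⟨k, 2 * m + 1, ⟨m, by ring⟩, ?_, ?_⟩
    · have : (k:ℝ) * α + ((2*m+1 : ℤ):ℝ) * ω = x + ω := by
        rw [← hkm]; push_cast [zsmul_eq_mul]; ring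
      rw [this]; have := hxmem.1; linarith
    · have : (k:ℝ) * α + ((2*m+1 : ℤ):ℝ) * ω = x + ω := by
        rw [← hkm]; push_cast [zsmul_eq_mul]; ring
      rw [this]; have := hxmem.2; linarith
  · -- uniqueness-type bound
    intro k l hl h1 h2
    by_contra habs
    push_neg at habs
    have hka1 : -(1/(n:ℝ)) < (k:ℝ) * α := neg_lt_of_abs_lt habs
    have hka2 : (k:ℝ) * α < 1/(n:ℝ) := lt_of_abs_lt habs
    have hlω1 : 0 < (l:ℝ) * ω := by linarith
    have hlpos : (0:ℝ) < (l:ℝ) := by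
      by_contra h
      push_neg at h
      nlinarith
    have hl1 : (1:ℝ) ≤ (l:ℝ) := by
      have : (0:ℤ) < l := by exact_mod_cast hlpos
      exact_mod_cast this
    have hge : ω ≤ (l:ℝ) * ω := le_mul_of_one_le_left hω.le hl1
    have hlω2 : (l:ℝ) * ω < 3 / (n:ℝ) := by
      have h3 : (3:ℝ)/n = 2/n + 1/n := by ring
      linarith
    have hων : ω < 3 / (n:ℝ) := lt_of_le_of_lt hge hlω2
    rw [div_lt_iff₀ hω] at hnN0
    rw [lt_div_iff₀ hnpos] at hων
    nlinarith
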